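/- arXiv:1302.4221 — 2 statements merged into one kernel-verified Lean document; each statement's English description precedes it below -/
import Mathlib

section
/- Let φ₁ : [0,1] → ℝ be smooth, satisfying the ODE φ₁'' + ((n-1)/r) φ₁' + λ₁ φ₁ = 0 on (0,1) with φ₁(1) = 0, bounded near 0 together with r^{n-1}(φ₁')² → 0 and r^n φ₁ φ₁' → 0 as r → 0, and normalized so that ωₙ ∫₀¹ φ₁(r)² r^{n-1} dr = 1 (where ωₙ > 0 and λ₁ > 0 are constants and n ≥ 2). Then φ₁'(1)² = 2λ₁/ωₙ. -/
open Filter Set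
open scoped ContDiff

/-- If `φ` solves `φ'' + ((n-1)/r) φ' + λ₁ φ = 0` on `(0,1)`, `φ(1) = 0`,
is bounded near `0` with `r^(n-1) (φ')² → 0` and `r^n φ φ' → 0` as `r → 0⁺`, and is
normalized by `ωₙ ∫₀¹ φ² r^(n-1) dr = 1`, then `φ'(1)² = 2λ₁/ωₙ`. -/
theorem statement0 (n : ℕ) (hn : 2 ≤ n) (lam ωn : ℝ) (hlam : 0 < lam) (hω : 0 < ωn)
    (φ : ℝ → ℝ) (hφ : ContDiff ℝ (⊤ : ℕ∞) φ)
    (hode : ∀ r ∈ Set.Ioo (0:ℝ) 1,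
      deriv (deriv φ) r + (((n:ℝ) - 1) / r) * deriv φ r + lam * φ r = 0)
    (hbc : φ 1 = 0)
    (hbdd : ∃ C : ℝ, ∀ r ∈ Set.Ioo (0:ℝ) 1, |φ r| ≤ C)
    (hlim1 : Tendsto (fun r : ℝ => r ^ (n - 1) * (deriv φ r) ^ 2)
      (nhdsWithin 0 (Set.Ioi 0)) (nhds 0))
    (hlim2 : Tendsto (fun r : ℝ => r ^ n * φ r * deriv φ r)
      (nhdsWithin 0 (Set.Ioi 0)) (nhds 0))
    (hnorm : ωn * ∫ r in (0:ℝ)..1, (φ r) ^ 2 * r ^ (n - 1) = 1) :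
    (deriv φ 1) ^ 2 = 2 * lam / ωn := by
  have hphi : ContDiff ℝ ∞ φ := hφ.of_le (by simp)
  have hφ1 : ContDiff ℝ ∞ (deriv φ) := by
    have := hphi.iterate_deriv 1
    simpa using this
  have hone : (1 : WithTop ℕ∞) ≤ ∞ := by exact_mod_cast le_top
  have hf : Differentiable ℝ φ := hphi.differentiable (lt_of_lt_of_le zero_lt_one hone).ne'
  have hf' : Differentiable ℝ (deriv φ) := hφ1.differentiable (lt_of_lt_of_le zero_lt_one hone).ne'
  have hcφ : Continuous φ := hphi.continuous
  have hcφ' : Continuous (deriv φ) := hφ1.continuous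
  -- cast facts
  have hcast1 : ((n - 1 : ℕ) : ℝ) = (n : ℝ) - 1 := by
    rw [Nat.cast_sub (by omega)]; norm_num
  have hcast2 : ((n - 1 - 1 : ℕ) : ℝ) = (n : ℝ) - 2 := by
    have h : n - 1 - 1 = n - 2 := by omega
    rw [h, Nat.cast_sub hn]; norm_num
  have hrpow1 : ∀ r : ℝ, r ^ n = r ^ (n - 1) * r := by
    intro r; rw [← pow_succ]; congr 1; omega
  have hrpow2 : ∀ r : ℝ, r ^ (n - 1) = r ^ (n - 1 - 1) * r := by
    intro r; rw [← pow_succ]; congr 1; omega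
  have hode' : ∀ r ∈ Set.Ioo (0:ℝ) 1,
      deriv (deriv φ) r = -((((n:ℝ) - 1) / r) * deriv φ r) - lam * φ r := by
    intro r hr; have := hode r hr; linarith
  -- integrands
  set I := ∫ r in (0:ℝ)..1, (φ r) ^ 2 * r ^ (n - 1) with hIdef
  set J := ∫ r in (0:ℝ)..1, (deriv φ r) ^ 2 * r ^ (n - 1) with hJdef
  set K := ∫ r in (0:ℝ)..1, r ^ n * φ r * deriv φ r with hKdef
  have hIint : IntervalIntegrable (fun r : ℝ => (φ r) ^ 2 * r ^ (n - 1)) MeasureTheory.volume 0 1 :=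
    ((hcφ.pow 2).mul (continuous_pow _)).intervalIntegrable _ _
  have hJint : IntervalIntegrable (fun r : ℝ => (deriv φ r) ^ 2 * r ^ (n - 1)) MeasureTheory.volume 0 1 :=
    ((hcφ'.pow 2).mul (continuous_pow _)).intervalIntegrable _ _
  have hKint : IntervalIntegrable (fun r : ℝ => r ^ n * φ r * deriv φ r) MeasureTheory.volume 0 1 :=
    (((continuous_pow n).mul hcφ).mul hcφ').intervalIntegrable _ _
  -- FTC for A(r) = r^n (φ')^2
  have EA : ∫ r in (0:ℝ)..1, ((2 - (n:ℝ)) * ((deriv φ r) ^ 2 * r ^ (n - 1))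
      - 2 * lam * (r ^ n * φ r * deriv φ r)) = (deriv φ 1) ^ 2 := by
    have hcont : ContinuousOn (fun r : ℝ => r ^ n * (deriv φ r) ^ 2) (Set.Icc 0 1) :=
      ((continuous_pow n).mul (hcφ'.pow 2)).continuousOn
    have hint : IntervalIntegrable (fun r : ℝ => (2 - (n:ℝ)) * ((deriv φ r) ^ 2 * r ^ (n - 1))
        - 2 * lam * (r ^ n * φ r * deriv φ r)) MeasureTheory.volume 0 1 :=
      (hJint.const_mul _).sub (hKint.const_mul _)
    have hderiv : ∀ r ∈ Set.Ioo (0:ℝ) 1, HasDerivWithinAt (fun r : ℝ => r ^ n * (deriv φ r) ^ 2)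
        ((2 - (n:ℝ)) * ((deriv φ r) ^ 2 * r ^ (n - 1))
          - 2 * lam * (r ^ n * φ r * deriv φ r)) (Set.Ioi r) r := by
      intro r hr
      have hd : HasDerivAt (fun r : ℝ => r ^ n * (deriv φ r) ^ 2)
          ((n:ℝ) * r ^ (n - 1) * (deriv φ r) ^ 2
            + r ^ n * ((2:ℝ) * deriv φ r ^ (2 - 1) * deriv (deriv φ) r)) r :=
        (hasDerivAt_pow n r).mul ((hf' r).hasDerivAt.pow 2)
      have heq : (n:ℝ) * r ^ (n - 1) * (deriv φ r) ^ 2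
            + r ^ n * ((2:ℝ) * deriv φ r ^ (2 - 1) * deriv (deriv φ) r)
          = (2 - (n:ℝ)) * ((deriv φ r) ^ 2 * r ^ (n - 1))
            - 2 * lam * (r ^ n * φ r * deriv φ r) := by
        rw [hode' r hr, hrpow1 r]
        have hr0 : r ≠ 0 := hr.1.ne'
        field_simp
        ring
      exact (heq ▸ hd).hasDerivWithinAt
    have := intervalIntegral.integral_eq_sub_of_hasDeriv_right_of_le zero_le_one hcont hderiv hint
    rw [this]
    simp [zero_pow (by omega : n ≠ 0)]
  -- FTC for B(r) = r^(n-1) (φ φ')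
  have EB : J - lam * I = 0 := by
    have hcont : ContinuousOn (fun r : ℝ => r ^ (n - 1) * (φ r * deriv φ r)) (Set.Icc 0 1) :=
      ((continuous_pow _).mul (hcφ.mul hcφ')).continuousOn
    have hint : IntervalIntegrable (fun r : ℝ => (deriv φ r) ^ 2 * r ^ (n - 1)
        - lam * ((φ r) ^ 2 * r ^ (n - 1))) MeasureTheory.volume 0 1 :=
      hJint.sub (hIint.const_mul _)
    have hderiv : ∀ r ∈ Set.Ioo (0:ℝ) 1, HasDerivWithinAt
        (fun r : ℝ => r ^ (n - 1) * (φ r * deriv φ r))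
        ((deriv φ r) ^ 2 * r ^ (n - 1) - lam * ((φ r) ^ 2 * r ^ (n - 1))) (Set.Ioi r) r := by
      intro r hr
      have hd : HasDerivAt (fun r : ℝ => r ^ (n - 1) * (φ r * deriv φ r))
          (((n - 1 : ℕ) : ℝ) * r ^ (n - 1 - 1) * (φ r * deriv φ r)
            + r ^ (n - 1) * (deriv φ r * deriv φ r + φ r * deriv (deriv φ) r)) r :=
        (hasDerivAt_pow (n - 1) r).mul ((hf r).hasDerivAt.mul (hf' r).hasDerivAt)
      have heq : ((n - 1 : ℕ) : ℝ) * r ^ (n - 1 - 1) * (φ r * deriv φ r)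
            + r ^ (n - 1) * (deriv φ r * deriv φ r + φ r * deriv (deriv φ) r)
          = (deriv φ r) ^ 2 * r ^ (n - 1) - lam * ((φ r) ^ 2 * r ^ (n - 1)) := by
        rw [hode' r hr, hcast1, hrpow2 r]
        have hr0 : r ≠ 0 := hr.1.ne'
        field_simp
        ring
      exact (heq ▸ hd).hasDerivWithinAt
    have h := intervalIntegral.integral_eq_sub_of_hasDeriv_right_of_le zero_le_one hcont hderiv hint
    rw [intervalIntegral.integral_sub hJint (hIint.const_mul _),
      intervalIntegral.integral_const_mul] at h
    rw [← hJdef, ← hIdef] at h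
    rw [h]
    simp [hbc, zero_pow (by omega : n - 1 ≠ 0)]
  -- FTC for C(r) = r^n φ^2
  have EC : (n:ℝ) * I + 2 * K = 0 := by
    have hcont : ContinuousOn (fun r : ℝ => r ^ n * (φ r) ^ 2) (Set.Icc 0 1) :=
      ((continuous_pow n).mul (hcφ.pow 2)).continuousOn
    have hint : IntervalIntegrable (fun r : ℝ => (n:ℝ) * ((φ r) ^ 2 * r ^ (n - 1))
        + 2 * (r ^ n * φ r * deriv φ r)) MeasureTheory.volume 0 1 :=
      (hIint.const_mul _).add (hKint.const_mul _)
    have hderiv : ∀ r ∈ Set.Ioo (0:ℝ) 1, HasDerivWithinAt (fun r : ℝ => r ^ n * (φ r) ^ 2)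
        ((n:ℝ) * ((φ r) ^ 2 * r ^ (n - 1)) + 2 * (r ^ n * φ r * deriv φ r)) (Set.Ioi r) r := by
      intro r hr
      have hd : HasDerivAt (fun r : ℝ => r ^ n * (φ r) ^ 2)
          ((n:ℝ) * r ^ (n - 1) * (φ r) ^ 2 + r ^ n * ((2:ℝ) * φ r ^ (2 - 1) * deriv φ r)) r :=
        (hasDerivAt_pow n r).mul ((hf r).hasDerivAt.pow 2)
      have heq : (n:ℝ) * r ^ (n - 1) * (φ r) ^ 2 + r ^ n * ((2:ℝ) * φ r ^ (2 - 1) * deriv φ r)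
          = (n:ℝ) * ((φ r) ^ 2 * r ^ (n - 1)) + 2 * (r ^ n * φ r * deriv φ r) := by
        ring
      exact (heq ▸ hd).hasDerivWithinAt
    have h := intervalIntegral.integral_eq_sub_of_hasDeriv_right_of_le zero_le_one hcont hderiv hint
    rw [intervalIntegral.integral_add (hIint.const_mul _) (hKint.const_mul _),
      intervalIntegral.integral_const_mul, intervalIntegral.integral_const_mul] at h
    rw [← hIdef, ← hKdef] at h
    rw [h]
    simp [hbc, zero_pow (by omega : n ≠ 0)]
  -- combine
  have EA' : (2 - (n:ℝ)) * J - 2 * lam * K = (deriv φ 1) ^ 2 := by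
    rw [hJdef, hKdef, ← intervalIntegral.integral_const_mul, ← intervalIntegral.integral_const_mul,
      ← intervalIntegral.integral_sub (hJint.const_mul _) (hKint.const_mul _)]
    exact EA
  have hD : (deriv φ 1) ^ 2 = 2 * lam * I := by
    have hJI : J = lam * I := by linarith
    have hKI : K = -((n:ℝ) * I) / 2 := by linarith
    rw [hJI, hKI] at EA'
    linear_combination EA'.symm
  rw [hD, eq_div_iff hω.ne']
  linear_combination 2 * lam * hnorm
end

section
/- Let φ₁ : [0,1] → ℝ be smooth, satisfying φ₁'' + ((n-1)/r) φ₁' + λ₁ φ₁ = 0 on (0,1) with φ₁(1) = 0, appropriately bounded at 0, and normalized so that ωₙ ∫₀¹ φ₁² r^{n-1} dr = 1. Define c² := ((n+2)/2) ∫₀¹ φ₁² r^{n+1} dr. Then c² = (n+2)·(2λ₁ + n(n-4)) / (12 λ₁ ωₙ). -/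
open Filter Set MeasureTheory

/-- With `φ` the normalized radial first Dirichlet eigenfunction on the unit
ball (same hypotheses as Statement 0), the constant `c² := ((n+2)/2) ∫₀¹ φ² r^(n+1) dr`
equals `(n+2)(2λ₁ + n(n-4)) / (12 λ₁ ωₙ)`. -/
theorem statement1 (n : ℕ) (hn : 2 ≤ n) (lam ωn : ℝ) (hlam : 0 < lam) (hω : 0 < ωn)
    (φ : ℝ → ℝ) (hφ : ContDiff ℝ (⊤ : ℕ∞) φ)
    (hode : ∀ r ∈ Set.Ioo (0:ℝ) 1,
      deriv (deriv φ) r + (((n:ℝ) - 1) / r) * deriv φ r + lam * φ r = 0)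
    (hbc : φ 1 = 0)
    (hbdd : ∃ C : ℝ, ∀ r ∈ Set.Ioo (0:ℝ) 1, |φ r| ≤ C)
    (hlim1 : Tendsto (fun r : ℝ => r ^ (n - 1) * (deriv φ r) ^ 2)
      (nhdsWithin 0 (Set.Ioi 0)) (nhds 0))
    (hlim2 : Tendsto (fun r : ℝ => r ^ n * φ r * deriv φ r)
      (nhdsWithin 0 (Set.Ioi 0)) (nhds 0))
    (hnorm : ωn * ∫ r in (0:ℝ)..1, (φ r) ^ 2 * r ^ (n - 1) = 1)
    (c2 : ℝ)
    (hc2 : c2 = (((n:ℝ) + 2) / 2) * ∫ r in (0:ℝ)..1, (φ r) ^ 2 * r ^ (n + 1)) :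
    c2 = ((n:ℝ) + 2) * (2 * lam + (n:ℝ) * ((n:ℝ) - 4)) / (12 * lam * ωn) := by
  obtain ⟨m, rfl⟩ : ∃ m, n = m + 2 := ⟨n - 2, by omega⟩
  have hφ2 : ContDiff ℝ (((⊤:ℕ∞)) : WithTop ℕ∞) φ := hφ.of_le (by simp)
  have hφd : ContDiff ℝ (((⊤:ℕ∞)) : WithTop ℕ∞) (deriv φ) := (contDiff_infty_iff_deriv.mp hφ2).2
  have hc0 : Continuous φ := hφ2.continuous
  have hc1 : Continuous (deriv φ) := hφd.continuous
  have hd0 : ∀ x : ℝ, HasDerivAt φ (deriv φ x) x :=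
    fun x => (hφ2.differentiable (by simp) x).hasDerivAt
  have hd1 : ∀ x : ℝ, HasDerivAt (deriv φ) (deriv (deriv φ) x) x :=
    fun x => (hφd.differentiable (by simp) x).hasDerivAt
  -- product rule helper
  have key : ∀ (k : ℕ) (g h g' h' : ℝ → ℝ),
      (∀ x, HasDerivAt g (g' x) x) → (∀ x, HasDerivAt h (h' x) x) →
      ∀ x : ℝ, HasDerivAt (fun r => r ^ k * g r * h r)
        (((k : ℝ) * x ^ (k - 1) * g x + x ^ k * g' x) * h x + x ^ k * g x * h' x) x := by
    intro k g h g' h' hg hh x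
    exact ((hasDerivAt_pow k x).mul (hg x)).mul (hh x)
  -- FTC helper
  have ftc : ∀ (F D : ℝ → ℝ), Continuous F → Continuous D →
      (∀ x ∈ Set.Ioo (0:ℝ) 1, HasDerivAt F (D x) x) →
      ∫ r in (0:ℝ)..1, D r = F 1 - F 0 := by
    intro F D hF hD hFD
    exact intervalIntegral.integral_eq_sub_of_hasDeriv_right_of_le zero_le_one
      hF.continuousOn (fun x hx => (hFD x hx).hasDerivWithinAt)
      (hD.intervalIntegrable 0 1)
  -- ODE rewritten
  have hodex : ∀ x ∈ Set.Ioo (0:ℝ) 1,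
      deriv (deriv φ) x = -((((m:ℝ)+2) - 1) / x) * deriv φ x - lam * φ x := by
    intro x hx
    have h := hode x hx
    push_cast at h ⊢
    linarith
  -- named integrals
  set N := ∫ r in (0:ℝ)..1, (φ r) ^ 2 * r ^ (m+1) with hN_def
  set I2 := ∫ r in (0:ℝ)..1, (φ r) ^ 2 * r ^ (m+3) with hI2_def
  set A := ∫ r in (0:ℝ)..1, (deriv φ r) ^ 2 * r ^ (m+3) with hA_def
  set A0 := ∫ r in (0:ℝ)..1, (deriv φ r) ^ 2 * r ^ (m+1) with hA0_def
  set P := ∫ r in (0:ℝ)..1, φ r * deriv φ r * r ^ (m+2) with hP_def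
  set Q := ∫ r in (0:ℝ)..1, φ r * deriv φ r * r ^ (m+4) with hQ_def
  have iN : IntervalIntegrable (fun r : ℝ => (φ r) ^ 2 * r ^ (m+1)) volume 0 1 :=
    ((hc0.pow 2).mul (continuous_pow _)).intervalIntegrable 0 1
  have iI2 : IntervalIntegrable (fun r : ℝ => (φ r) ^ 2 * r ^ (m+3)) volume 0 1 :=
    ((hc0.pow 2).mul (continuous_pow _)).intervalIntegrable 0 1
  have iA : IntervalIntegrable (fun r : ℝ => (deriv φ r) ^ 2 * r ^ (m+3)) volume 0 1 :=
    ((hc1.pow 2).mul (continuous_pow _)).intervalIntegrable 0 1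
  have iA0 : IntervalIntegrable (fun r : ℝ => (deriv φ r) ^ 2 * r ^ (m+1)) volume 0 1 :=
    ((hc1.pow 2).mul (continuous_pow _)).intervalIntegrable 0 1
  have iP : IntervalIntegrable (fun r : ℝ => φ r * deriv φ r * r ^ (m+2)) volume 0 1 :=
    ((hc0.mul hc1).mul (continuous_pow _)).intervalIntegrable 0 1
  have iQ : IntervalIntegrable (fun r : ℝ => φ r * deriv φ r * r ^ (m+4)) volume 0 1 :=
    ((hc0.mul hc1).mul (continuous_pow _)).intervalIntegrable 0 1
  -- e1 : A0 - lam * N = 0   from F = r^(m+1) φ φ'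
  have e1 : A0 - lam * N = 0 := by
    have h := ftc (fun r => r ^ (m+1) * φ r * deriv φ r)
        (fun r => (deriv φ r) ^ 2 * r ^ (m+1) - lam * ((φ r) ^ 2 * r ^ (m+1)))
        (((continuous_pow _).mul hc0).mul hc1)
        (((hc1.pow 2).mul (continuous_pow _)).sub
          (continuous_const.mul ((hc0.pow 2).mul (continuous_pow _))))
        (fun x hx => by
          have hx0 : x ≠ 0 := ne_of_gt hx.1
          have h := key (m+1) φ (deriv φ) (deriv φ) (deriv (deriv φ)) hd0 hd1 x
          rw [hodex x hx] at h
          convert h using 1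
          simp only [Nat.add_sub_cancel, Nat.reduceSubDiff]
          push_cast
          field_simp
          ring)
    rw [intervalIntegral.integral_sub iA0 (iN.const_mul lam),
      intervalIntegral.integral_const_mul] at h
    simp [hbc] at h
    linarith [h]
  -- e3 : (m+2) N + 2 P = 0   from F = r^(m+2) φ^2
  have e3 : ((m:ℝ)+2) * N + 2 * P = 0 := by
    have h := ftc (fun r => r ^ (m+2) * φ r * φ r)
        (fun r => ((m:ℝ)+2) * ((φ r) ^ 2 * r ^ (m+1)) + 2 * (φ r * deriv φ r * r ^ (m+2)))
        (((continuous_pow _).mul hc0).mul hc0)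
        ((continuous_const.mul ((hc0.pow 2).mul (continuous_pow _))).add
          (continuous_const.mul ((hc0.mul hc1).mul (continuous_pow _))))
        (fun x hx => by
          have h := key (m+2) φ φ (deriv φ) (deriv φ) hd0 hd0 x
          convert h using 1
          simp only [Nat.add_sub_cancel, Nat.reduceSubDiff]
          push_cast
          ring)
    rw [intervalIntegral.integral_add (iN.const_mul _) (iP.const_mul _),
      intervalIntegral.integral_const_mul, intervalIntegral.integral_const_mul] at h
    simp [hbc] at h
    linarith [h]
  -- e2 : -m A0 - 2 lam P = (deriv φ 1)^2   from F = r^(m+2) φ'^2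
  have e2 : -(m:ℝ) * A0 - 2 * lam * P = (deriv φ 1) ^ 2 := by
    have h := ftc (fun r => r ^ (m+2) * deriv φ r * deriv φ r)
        (fun r => -(m:ℝ) * ((deriv φ r) ^ 2 * r ^ (m+1))
          - 2 * lam * (φ r * deriv φ r * r ^ (m+2)))
        (((continuous_pow _).mul hc1).mul hc1)
        ((continuous_const.mul ((hc1.pow 2).mul (continuous_pow _))).sub
          (continuous_const.mul ((hc0.mul hc1).mul (continuous_pow _))))
        (fun x hx => by
          have hx0 : x ≠ 0 := ne_of_gt hx.1
          have h := key (m+2) (deriv φ) (deriv φ) (deriv (deriv φ)) (deriv (deriv φ)) hd1 hd1 x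
          rw [hodex x hx] at h
          convert h using 1
          simp only [Nat.add_sub_cancel, Nat.reduceSubDiff]
          push_cast
          field_simp
          ring)
    rw [intervalIntegral.integral_sub (iA0.const_mul _) ((iP.const_mul _)),
      intervalIntegral.integral_const_mul, intervalIntegral.integral_const_mul] at h
    simp at h
    linarith [h]
  -- e4 : 2 P + A - lam * I2 = 0   from F = r^(m+3) φ φ'
  have e4 : 2 * P + A - lam * I2 = 0 := by
    have h := ftc (fun r => r ^ (m+3) * φ r * deriv φ r)
        (fun r => 2 * (φ r * deriv φ r * r ^ (m+2)) + (deriv φ r) ^ 2 * r ^ (m+3)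
          - lam * ((φ r) ^ 2 * r ^ (m+3)))
        (((continuous_pow _).mul hc0).mul hc1)
        (((continuous_const.mul ((hc0.mul hc1).mul (continuous_pow _))).add
          ((hc1.pow 2).mul (continuous_pow _))).sub
          (continuous_const.mul ((hc0.pow 2).mul (continuous_pow _))))
        (fun x hx => by
          have hx0 : x ≠ 0 := ne_of_gt hx.1
          have h := key (m+3) φ (deriv φ) (deriv φ) (deriv (deriv φ)) hd0 hd1 x
          rw [hodex x hx] at h
          convert h using 1
          simp only [Nat.add_sub_cancel, Nat.reduceSubDiff]
          push_cast
          field_simp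
          ring)
    rw [intervalIntegral.integral_sub ((iP.const_mul 2).add iA) (iI2.const_mul lam),
      intervalIntegral.integral_add (iP.const_mul 2) iA,
      intervalIntegral.integral_const_mul, intervalIntegral.integral_const_mul] at h
    simp [hbc] at h
    linarith [h]
  -- e5 : (m+4) I2 + 2 Q = 0   from F = r^(m+4) φ^2
  have e5 : ((m:ℝ)+4) * I2 + 2 * Q = 0 := by
    have h := ftc (fun r => r ^ (m+4) * φ r * φ r)
        (fun r => ((m:ℝ)+4) * ((φ r) ^ 2 * r ^ (m+3)) + 2 * (φ r * deriv φ r * r ^ (m+4)))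
        (((continuous_pow _).mul hc0).mul hc0)
        ((continuous_const.mul ((hc0.pow 2).mul (continuous_pow _))).add
          (continuous_const.mul ((hc0.mul hc1).mul (continuous_pow _))))
        (fun x hx => by
          have h := key (m+4) φ φ (deriv φ) (deriv φ) hd0 hd0 x
          convert h using 1
          simp only [Nat.add_sub_cancel, Nat.reduceSubDiff]
          push_cast
          ring)
    rw [intervalIntegral.integral_add (iI2.const_mul _) (iQ.const_mul _),
      intervalIntegral.integral_const_mul, intervalIntegral.integral_const_mul] at h
    simp [hbc] at h
    linarith [h]
  -- e6 : (2-m) A - 2 lam Q = (deriv φ 1)^2   from F = r^(m+4) φ'^2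
  have e6 : (2-(m:ℝ)) * A - 2 * lam * Q = (deriv φ 1) ^ 2 := by
    have h := ftc (fun r => r ^ (m+4) * deriv φ r * deriv φ r)
        (fun r => (2-(m:ℝ)) * ((deriv φ r) ^ 2 * r ^ (m+3))
          - 2 * lam * (φ r * deriv φ r * r ^ (m+4)))
        (((continuous_pow _).mul hc1).mul hc1)
        ((continuous_const.mul ((hc1.pow 2).mul (continuous_pow _))).sub
          (continuous_const.mul ((hc0.mul hc1).mul (continuous_pow _))))
        (fun x hx => by
          have hx0 : x ≠ 0 := ne_of_gt hx.1
          have h := key (m+4) (deriv φ) (deriv φ) (deriv (deriv φ)) (deriv (deriv φ)) hd1 hd1 x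
          rw [hodex x hx] at h
          convert h using 1
          simp only [Nat.add_sub_cancel, Nat.reduceSubDiff]
          push_cast
          field_simp
          ring)
    rw [intervalIntegral.integral_sub (iA.const_mul _) (iQ.const_mul _),
      intervalIntegral.integral_const_mul, intervalIntegral.integral_const_mul] at h
    simp at h
    linarith [h]
  -- combine
  have hNval : N = 1 / ωn := by
    have : ωn * N = 1 := hnorm
    field_simp at this ⊢
    linarith
  have hI2val : 6 * lam * I2 = 2 * lam * N - (2 - (m:ℝ)) * ((m:ℝ) + 2) * N := by
    linear_combination e6 - e2 - (2-(m:ℝ)) * e4 + lam * e5 - (m:ℝ) * e1 + (2-(m:ℝ)-lam) * e3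
  have hc2' : c2 = (((m:ℝ)+4) / 2) * I2 := by
    rw [hc2]; push_cast; ring_nf
  rw [hc2']
  rw [hNval] at hI2val
  have hlam' : lam ≠ 0 := ne_of_gt hlam
  have hω' : ωn ≠ 0 := ne_of_gt hω
  have hI2 : I2 = (2 * lam - (2 - (m:ℝ)) * ((m:ℝ) + 2)) / (6 * lam * ωn) := by
    field_simp at hI2val ⊢
    linarith
  rw [hI2]
  push_cast
  field_simp
  ring
end
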